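/- arXiv:2207.03254 — 6 statements merged into one kernel-verified Lean document; each statement's English description precedes it below -/
import Mathlib

section
/- Let Θ(q) = Σ_{i,j ∈ I} q^{φ(i,j)} E_{ii} ⊗ E_{jj} + (q - q^{-1}) Σ_{i<j} (-1)^{p(i)} (E_{ji} + E_{-j,-i}) ⊗ E_{ij} be an element of End(V)⊗End(V) over ℚ(q), where φ(i,j) = δ_{|i|,|j|} sgn(j). Then Θ(q) · Θ(q^{-1}) = 1 ⊗ 1; that is, Θ(q) is invertible and its inverse is obtained by replacing q with q^{-1}. -/
/-!
Split `Θ(x) = D(x) + (x - x⁻¹) B` into its diagonal part `D(x) = Σ x^{φ(i,j)} E_{ii} ⊗ E_{jj}` and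
the `x`-independent off-diagonal part `B`. Then `D(x) D(x⁻¹) = 1`, `D(x) B = B D(x⁻¹)` (because
`φ(j,i) = -φ(i,j)` and `φ(-j,-i) = -φ(i,j)` on the entries where `B` lives) and `B² = 0`, so
`Θ(x) Θ(x⁻¹) = (D(x) + t B)(D(x⁻¹) - t B) = 1` with `t = x - x⁻¹`.
-/

/-- The index set `I = {1,…,n,-1,…,-n}`: `Sum.inl a ↔ a+1`, `Sum.inr a ↔ -(a+1)`. -/
abbrev Idx (n : ℕ) := Fin n ⊕ Fin n

/-- Parity: `0` on positive indices, `1` on negative ones. -/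
def pa {n : ℕ} : Idx n → ℕ
  | .inl _ => 0
  | .inr _ => 1

/-- The integer represented by an index. -/
def idxZ {n : ℕ} : Idx n → ℤ
  | .inl a => (a : ℤ) + 1
  | .inr a => -((a : ℤ) + 1)

/-- Negation of an index. -/
def ng {n : ℕ} : Idx n → Idx n
  | .inl a => .inr a
  | .inr a => .inl a

/-- Absolute value of an index. -/
def absIdx {n : ℕ} : Idx n → Fin n
  | .inl a => a
  | .inr a => a

/-- `φ(i,j) = δ_{|i|,|j|} sgn(j)`. -/
def phiIdx {n : ℕ} (i j : Idx n) : ℤ :=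
  if absIdx i = absIdx j then (if pa j = 1 then -1 else 1) else 0

/-- The coefficient of `E_{ab} ⊗ E_{cd}` in
`Θ(x) = Σ_{i,j} x^{φ(i,j)} E_{ii}⊗E_{jj} + (x - x⁻¹) Σ_{i<j} (-1)^{p(i)}(E_{ji}+E_{-j,-i})⊗E_{ij}`. -/
noncomputable def thetaCoeff {n : ℕ} (x : RatFunc ℚ) (a b c d : Idx n) : RatFunc ℚ :=
  (if a = b ∧ c = d then x ^ phiIdx a c else 0)
  + (if idxZ c < idxZ d ∧ a = d ∧ b = c then (x - x⁻¹) * (-1) ^ pa c else 0)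
  + (if idxZ c < idxZ d ∧ a = ng d ∧ b = ng c then (x - x⁻¹) * (-1) ^ pa c else 0)

/-- The matrix of `Θ(x) ∈ End(V) ⊗ End(V)` acting on `V ⊗ V`, where the superalgebra
`End(V) ⊗ End(V)` is represented faithfully on `V ⊗ V` via the Koszul sign rule:
`(E_{ab} ⊗ E_{cd})(v_b ⊗ v_d) = (-1)^{(p(c)+p(d))·p(b)} v_a ⊗ v_c`.  Under this
representation the super tensor-product multiplication
`(a'⊗b)(a⊗b') = (-1)^{p̄(a)p̄(b)} a'a ⊗ bb'` becomes matrix multiplication. -/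
noncomputable def thetaMat (n : ℕ) (x : RatFunc ℚ) :
    Matrix (Idx n × Idx n) (Idx n × Idx n) (RatFunc ℚ) :=
  Matrix.of fun rc cc =>
    (-1 : RatFunc ℚ) ^ ((pa rc.2 + pa cc.2) * pa cc.1) *
      thetaCoeff x rc.1 cc.1 rc.2 cc.2

namespace Matrix

variable {ι R : Type*} [DecidableEq ι]

def monomial [Zero R] (τ : ι → ι) (β : ι → R) : Matrix ι ι R :=
  of fun i j => if j = τ i then β i else 0

section Semiring

variable [Semiring R]

@[simp]
lemma monomial_zero (τ : ι → ι) : monomial τ (fun _ => (0 : R)) = 0 := by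
  ext i j; simp [monomial]

lemma monomial_add (τ : ι → ι) (β γ : ι → R) :
    monomial τ β + monomial τ γ = monomial τ fun i => β i + γ i := by
  ext i j; simp only [monomial, add_apply, of_apply]; split_ifs <;> simp

variable [Fintype ι]

lemma monomial_mul (τ : ι → ι) (β : ι → R) (M : Matrix ι ι R) :
    monomial τ β * M = of fun i j => β i * M (τ i) j := by
  ext i j; simp [monomial, mul_apply, ite_mul]

lemma monomial_mul_monomial (τ σ : ι → ι) (β γ : ι → R) :
    monomial τ β * monomial σ γ = monomial (σ ∘ τ) fun i => β i * γ (τ i) := by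
  rw [monomial_mul]; ext i j; simp [monomial, mul_ite]

end Semiring

lemma diagonal_mul_monomial_eq [CommSemiring R] [Fintype ι] (τ : ι → ι) (β d d' : ι → R)
    (h : ∀ i, β i ≠ 0 → d i = d' (τ i)) :
    diagonal d * monomial τ β = monomial τ β * diagonal d' := by
  ext i j
  simp only [diagonal_mul, mul_diagonal, monomial, of_apply]
  split_ifs with hj
  · by_cases hβ : β i = 0
    · simp [hβ]
    · rw [hj, h i hβ, mul_comm]
  · simp

end Matrix

lemma add_smul_mul_sub_smul_eq_one {K A : Type*} [CommRing K] [Ring A] [Algebra K A] {d d' b : A}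
    (t : K) (hd : d * d' = 1) (hdb : d * b = b * d') (hb : b * b = 0) :
    (d + t • b) * (d' - t • b) = 1 := by
  simp only [add_mul, mul_sub, smul_mul_assoc, mul_smul_comm, hd, hdb, hb, smul_zero, add_zero,
    add_sub_cancel_right]

section Theta

variable {n : ℕ}

@[simp]
lemma ng_ng (i : Idx n) : ng (ng i) = i := by cases i <;> rfl

lemma idxZ_ng (i : Idx n) : idxZ (ng i) = -idxZ i := by cases i <;> simp [ng, idxZ]

lemma phiIdx_ng_ng (i j : Idx n) : phiIdx (ng i) (ng j) = -phiIdx i j := by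
  cases i <;> cases j <;> simp [phiIdx, ng, absIdx, pa] <;> split_ifs <;> rfl

lemma phiIdx_swap_of_ne {i j : Idx n} (h : i ≠ j) : phiIdx j i = -phiIdx i j := by
  cases i <;> cases j <;> simp_all [phiIdx, absIdx, pa, eq_comm] <;> split_ifs <;> rfl

lemma phiIdx_swap_of_ne_ng {i j : Idx n} (h : i ≠ ng j) : phiIdx j i = phiIdx i j := by
  cases i <;> cases j <;> simp_all [phiIdx, absIdx, pa, ng, eq_comm]

def ngFlip (i : Idx n × Idx n) : Idx n × Idx n := (ng i.2, ng i.1)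

/- Signs here and in `ngFlipCoeff`: the `(-1)^{p(i)}` of `Θ` times the Koszul sign of `thetaMat`,
reduced mod 2. -/
noncomputable def flipCoeff (i : Idx n × Idx n) : RatFunc ℚ :=
  if idxZ i.2 < idxZ i.1 then (-1) ^ (pa i.1 * pa i.2) else 0

noncomputable def ngFlipCoeff (i : Idx n × Idx n) : RatFunc ℚ :=
  if idxZ i.2 < idxZ (ng i.1) then -(-1) ^ (pa i.1 * pa (ng i.2)) else 0

noncomputable def thetaDiag (n : ℕ) (x : RatFunc ℚ) :
    Matrix (Idx n × Idx n) (Idx n × Idx n) (RatFunc ℚ) :=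
  Matrix.diagonal fun i => x ^ phiIdx i.1 i.2

noncomputable def thetaOff (n : ℕ) : Matrix (Idx n × Idx n) (Idx n × Idx n) (RatFunc ℚ) :=
  Matrix.monomial Prod.swap flipCoeff + Matrix.monomial ngFlip ngFlipCoeff

lemma thetaMat_eq (x : RatFunc ℚ) :
    thetaMat n x = thetaDiag n x + (x - x⁻¹) • thetaOff n := by
  ext ⟨a, b⟩ ⟨e, f⟩
  simp only [thetaMat, thetaCoeff, thetaDiag, thetaOff, Matrix.monomial, flipCoeff, ngFlipCoeff,
    ngFlip, Matrix.of_apply, Matrix.add_apply, Matrix.smul_apply, Matrix.diagonal_apply,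
    smul_eq_mul, Prod.swap, Prod.mk.injEq]
  rcases a with a | a <;> rcases b with b | b <;> rcases e with e | e <;> rcases f with f | f <;>
    simp [ng, pa, idxZ] <;> split_ifs <;> simp_all

lemma thetaDiag_mul_inv {x : RatFunc ℚ} (hx : x ≠ 0) :
    thetaDiag n x * thetaDiag n x⁻¹ = 1 := by
  rw [thetaDiag, thetaDiag, Matrix.diagonal_mul_diagonal, ← Matrix.diagonal_one]
  congr 1
  funext i
  rw [inv_zpow, mul_inv_cancel₀ (zpow_ne_zero _ hx)]

lemma thetaDiag_mul_thetaOff (x : RatFunc ℚ) :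
    thetaDiag n x * thetaOff n = thetaOff n * thetaDiag n x⁻¹ := by
  rw [thetaDiag, thetaDiag, thetaOff, mul_add, add_mul]
  congr 1 <;> apply Matrix.diagonal_mul_monomial_eq <;> rintro ⟨a, b⟩ hβ
  · have hba : idxZ b < idxZ a := by by_contra h; simp [flipCoeff, h] at hβ
    have hab : a ≠ b := by rintro rfl; exact hba.false
    simp [phiIdx_swap_of_ne hab]
  · have hba : idxZ b < idxZ (ng a) := by by_contra h; simp [ngFlipCoeff, h] at hβ
    have hab : a ≠ ng b := by rintro rfl; simp at hba
    simp [ngFlip, phiIdx_ng_ng, phiIdx_swap_of_ne_ng hab]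

lemma flipCoeff_mul_flipCoeff_swap (i : Idx n × Idx n) :
    flipCoeff i * flipCoeff i.swap = 0 := by
  simp only [flipCoeff, Prod.fst_swap, Prod.snd_swap]
  split_ifs with h₁ h₂ <;> first | exact absurd h₂ h₁.not_gt | simp

lemma ngFlipCoeff_mul_ngFlipCoeff_ngFlip (i : Idx n × Idx n) :
    ngFlipCoeff i * ngFlipCoeff (ngFlip i) = 0 := by
  simp only [ngFlipCoeff, ngFlip, ng_ng]
  split_ifs with h₁ h₂ <;> first | exact absurd h₂ h₁.not_gt | simp

/- The paths `(a,b) → (b,a) → (-a,-b)` and `(a,b) → (-b,-a) → (-a,-b)` through `B` exist under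
the same condition `b < a, b < -a`, and carry opposite signs. -/
lemma flipCoeff_mul_ngFlipCoeff_swap_add (i : Idx n × Idx n) :
    flipCoeff i * ngFlipCoeff i.swap + ngFlipCoeff i * flipCoeff (ngFlip i) = 0 := by
  obtain ⟨a, b⟩ := i
  simp only [flipCoeff, ngFlipCoeff, ngFlip, Prod.swap, idxZ_ng]
  rcases a with a | a <;> rcases b with b | b <;> simp [ng, pa, idxZ] <;> split_ifs <;>
    first | omega | ring

lemma thetaOff_mul_self : thetaOff n * thetaOff n = 0 := by
  have hcomm : ngFlip ∘ Prod.swap = Prod.swap ∘ (ngFlip : Idx n × Idx n → _) := rfl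
  simp only [thetaOff, add_mul, mul_add, Matrix.monomial_mul_monomial, hcomm,
    flipCoeff_mul_flipCoeff_swap, ngFlipCoeff_mul_ngFlipCoeff_ngFlip, Matrix.monomial_zero,
    zero_add, add_zero]
  rw [add_comm, Matrix.monomial_add]
  simp only [flipCoeff_mul_ngFlipCoeff_swap_add, Matrix.monomial_zero]

lemma thetaMat_mul_thetaMat_inv {x : RatFunc ℚ} (hx : x ≠ 0) :
    thetaMat n x * thetaMat n x⁻¹ = 1 := by
  rw [thetaMat_eq, thetaMat_eq, inv_inv, ← neg_sub x, neg_smul, ← sub_eq_add_neg]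
  exact add_smul_mul_sub_smul_eq_one (x - x⁻¹) (thetaDiag_mul_inv hx) (thetaDiag_mul_thetaOff x)
    thetaOff_mul_self

end Theta

/-- `Θ(q) · Θ(q⁻¹) = 1 ⊗ 1`: `Θ(q)` is invertible in the superalgebra
`End(V) ⊗ End(V)` and its inverse is obtained by replacing `q` with `q⁻¹`. -/
theorem stmt6 (n : ℕ) :
    thetaMat n RatFunc.X * thetaMat n (RatFunc.X)⁻¹ = 1 ∧
    thetaMat n (RatFunc.X)⁻¹ * thetaMat n RatFunc.X = 1 := by
  have hX : (RatFunc.X : RatFunc ℚ) ≠ 0 := RatFunc.X_ne_zero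
  refine ⟨thetaMat_mul_thetaMat_inv hX, ?_⟩
  simpa using thetaMat_mul_thetaMat_inv (n := n) (inv_ne_zero hX)
end

section
/- With Θ as above and J ⊗ 1 ∈ End(V) ⊗ End(V), one has Θ · (J ⊗ 1) = (J ⊗ 1) · Θ in the superalgebra End(V) ⊗ End(V), where J = Σ_{i ∈ I} (-1)^{p(i)} E_{-i,i}. -/
/-- The matrix of `J ⊗ 1 ∈ End(V) ⊗ End(V)`, where `J = Σ_{i ∈ I} (-1)^{p(i)} E_{-i,i}`
(the second tensor factor is even, so no Koszul sign appears). -/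
noncomputable def jOneMat (n : ℕ) :
    Matrix (Idx n × Idx n) (Idx n × Idx n) (RatFunc ℚ) :=
  Matrix.of fun rc cc =>
    if rc.2 = cc.2 ∧ rc.1 = ng cc.1 then (-1 : RatFunc ℚ) ^ pa cc.1 else 0

theorem ng_involutive {n : ℕ} : Function.Involutive (ng : Idx n → Idx n) := by
  rintro (i | i) <;> rfl

theorem pa_ng_add_pa {n : ℕ} (i : Idx n) : pa (ng i) + pa i = 1 := by
  rcases i with i | i <;> rfl

theorem thetaCoeff_ng_ng {n : ℕ} (x : RatFunc ℚ) (a b c d : Idx n) :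
    thetaCoeff x (ng a) (ng b) c d = thetaCoeff x a b c d := by
  have hφ : phiIdx (ng a) c = phiIdx a c := by rcases a with a | a <;> rfl
  simp only [thetaCoeff, ng_involutive.injective.eq_iff, ng_involutive.eq_iff, hφ]
  ring

theorem even_pa_of_thetaCoeff_ne_zero {n : ℕ} {x : RatFunc ℚ} {a b c d : Idx n}
    (h : thetaCoeff x a b c d ≠ 0) : Even (pa a + pa b + pa c + pa d) := by
  contrapose! h
  have h₁ : ¬(a = b ∧ c = d) := by
    rintro ⟨rfl, rfl⟩; exact h ⟨pa a + pa c, by ring⟩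
  have h₂ : ¬(idxZ c < idxZ d ∧ a = d ∧ b = c) := by
    rintro ⟨-, rfl, rfl⟩; exact h ⟨pa a + pa b, by ring⟩
  have h₃ : ¬(idxZ c < idxZ d ∧ a = ng d ∧ b = ng c) := by
    rintro ⟨-, rfl, rfl⟩; exact h ⟨1, by linarith [pa_ng_add_pa c, pa_ng_add_pa d]⟩
  simp only [thetaCoeff, if_neg h₁, if_neg h₂, if_neg h₃, add_zero]

theorem thetaMat_ng_mul_neg_one_pow {n : ℕ} (x : RatFunc ℚ) (a b c d : Idx n) :
    thetaMat n x (a, b) (ng c, d) * (-1) ^ pa c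
      = (-1) ^ pa (ng a) * thetaMat n x (ng a, b) (c, d) := by
  have hT : thetaCoeff x (ng a) c b d = thetaCoeff x a (ng c) b d := by
    rw [← thetaCoeff_ng_ng, ng_involutive]
  simp only [thetaMat, Matrix.of_apply, hT]
  by_cases h : thetaCoeff x a (ng c) b d = 0
  · simp [h]
  have hsign : (-1 : RatFunc ℚ) ^ ((pa b + pa d) * pa (ng c)) * (-1) ^ pa c
      = (-1) ^ pa (ng a) * (-1) ^ ((pa b + pa d) * pa c) := by
    have := even_pa_of_thetaCoeff_ne_zero h
    rcases a with _ | _ <;> rcases b with _ | _ <;> rcases c with _ | _ <;>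
      rcases d with _ | _ <;> simp_all [pa, ng] <;> norm_num at this
  linear_combination thetaCoeff x a (ng c) b d * hsign

theorem jOneMat_apply_left {n : ℕ} (a b : Idx n) (k : Idx n × Idx n) :
    jOneMat n k (a, b) = if k = (ng a, b) then (-1) ^ pa a else 0 := by
  simp only [jOneMat, Matrix.of_apply, Prod.ext_iff, and_comm]

theorem jOneMat_apply_right {n : ℕ} (a b : Idx n) (k : Idx n × Idx n) :
    jOneMat n (a, b) k = if k = (ng a, b) then (-1) ^ pa (ng a) else 0 := by
  obtain ⟨k₁, k₂⟩ := k
  simp only [jOneMat, Matrix.of_apply, Prod.mk.injEq]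
  by_cases h : k₁ = ng a
  · simp [h, ng_involutive a, eq_comm]
  · have h' : a ≠ ng k₁ := fun e => h (by rw [e, ng_involutive])
    simp [h, h']

theorem mul_jOneMat_apply {n : ℕ} (M : Matrix (Idx n × Idx n) (Idx n × Idx n) (RatFunc ℚ))
    (a b c d : Idx n) : (M * jOneMat n) (a, b) (c, d) = M (a, b) (ng c, d) * (-1) ^ pa c := by
  simp only [Matrix.mul_apply, jOneMat_apply_left, mul_ite, mul_zero, Finset.sum_ite_eq',
    Finset.mem_univ, if_true]

theorem jOneMat_mul_apply {n : ℕ} (M : Matrix (Idx n × Idx n) (Idx n × Idx n) (RatFunc ℚ))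
    (a b c d : Idx n) : (jOneMat n * M) (a, b) (c, d) = (-1) ^ pa (ng a) * M (ng a, b) (c, d) := by
  simp only [Matrix.mul_apply, jOneMat_apply_right, ite_mul, zero_mul, Finset.sum_ite_eq',
    Finset.mem_univ, if_true]

/-- `Θ · (J ⊗ 1) = (J ⊗ 1) · Θ` in the superalgebra `End(V) ⊗ End(V)`. -/
theorem stmt7 (n : ℕ) :
    thetaMat n RatFunc.X * jOneMat n = jOneMat n * thetaMat n RatFunc.X := by
  ext ⟨a, b⟩ ⟨c, d⟩
  rw [mul_jOneMat_apply, jOneMat_mul_apply, thetaMat_ng_mul_neg_one_pow]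
end

section
/- In U_q(q_n), the square of the antipode is given by S²(u_{ij}) = q^{2|j| - 2|i|} u_{ij} for all generators u_{ij}, i ≤ j. Consequently the antipode S is invertible with S^{-1}(u_{ij}) = q^{2|i|-2|j|} S(u_{ij}). -/
/-!
Applying `S` to the antipode identity `∑ₘ u_{im} S(u_{mj}) = δ_{ij}` and using that `S` is
a super-antihomomorphism gives `∑ₘ ± S²(u_{mj}) S(u_{im}) = δ_{ij}`. Comparing this with the
twisted identity `∑ₘ c(i,m,j) u_{mj} S(u_{im}) = δ_{ij}`, where `c(i,m,j) = ± q^{2|j|-2|m|}`,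
yields `S²(u_{ij}) = q^{2|j|-2|i|} u_{ij}` by induction on `j - i`.

The twisted identity is proved by its own induction on `j - i`: expand `S(u_{im})` by the antipode
identity, move `u_{-i,-i}` to the front and reorder `u_{mj} u_{ir}` with the defining relations.
Of the four resulting double sums, one collapses by induction to `q^{φ(j,j)} u_{ij}`, two vanish
by induction or by the antipode identity for `(-m, m)`, and the diagonal one is a telescoping
`q`-series; together they cancel the leading term exactly.

Finally `S²` acts on every monomial in the generators by a nonzero scalar, and these monomials
span `U_q(q_n)`, so `S²`, hence `S`, is bijective.
-/

/-- The base field `ℂ(q)`. -/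
abbrev Kq := RatFunc ℂ

/-- The generator `q` of `ℂ(q)`. -/
noncomputable def qc : Kq := RatFunc.X

/-- `z = q - q⁻¹`. -/
noncomputable def zc : Kq := qc - qc⁻¹

/-- Parity of an index. -/
def pz (i : ℤ) : ℕ := if i < 0 then 1 else 0

/-- `φ(i,j) = δ_{|i|,|j|} sgn(j)`. -/
def phiz (i j : ℤ) : ℤ := if |i| = |j| then (if j < 0 then -1 else 1) else 0

/-- `θ(i,j,k) = (-1)^{p(i)p(j) + p(j)p(k) + p(i)p(k)}`. -/
noncomputable def thz (i j k : ℤ) : Kq := (-1 : Kq) ^ (pz i * pz j + pz j * pz k + pz i * pz k)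

/-- Membership in the index set `I = {±1, …, ±n}`. -/
def inI (n : ℕ) (i : ℤ) : Prop := i ≠ 0 ∧ |i| ≤ (n : ℤ)

open Finset

lemma sum_Icc_telescope {M : Type*} [AddCommGroup M] {g f : ℤ → M} {a b : ℤ} (h : a ≤ b + 1)
    (hg : ∀ m ∈ Icc a b, g m = f (m + 1) - f m) : ∑ m ∈ Icc a b, g m = f (b + 1) - f a := by
  rw [sum_congr rfl hg]
  clear hg
  induction b, (by omega : a - 1 ≤ b) using Int.leInduction with
  | base => simp
  | succ b hab ih =>
    rw [← insert_Icc_right_eq_Icc_add_one (by omega), sum_insert (by simp), ih (by omega)]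
    abel

lemma sum_ite_eq_sum_of_iff {α M : Type*} [AddCommMonoid M] {s t : Finset α} {p : α → Prop}
    [DecidablePred p] (f : α → M) (h : ∀ x, x ∈ s ∧ p x ↔ x ∈ t) :
    ∑ x ∈ s, (if p x then f x else 0) = ∑ x ∈ t, f x := by
  rw [← sum_filter]
  congr 1
  ext x
  rw [mem_filter, h]

lemma mul_ite_one_zero_mul_smul {R M : Type*} [Semiring R] [AddCommMonoid M] [Module R M]
    (p : Prop) [Decidable p] (a b : R) (x : M) :
    (a * (if p then 1 else 0) * b) • x = if p then (a * b) • x else 0 := by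
  split_ifs <;> simp

lemma neg_one_pow_val_natCast_mul_val_natCast {R : Type*} [Ring R] (a b : ℕ) :
    (-1 : R) ^ ((a : ZMod 2).val * (b : ZMod 2).val) = (-1) ^ (a * b) := by
  rw [ZMod.val_natCast, ZMod.val_natCast, neg_one_pow_eq_pow_mod_two, ← Nat.mul_mod,
    ← neg_one_pow_eq_pow_mod_two]

theorem bijective_of_span_eigenvectors {K V : Type*} [Field K] [AddCommGroup V] [Module K V]
    (f : V →ₗ[K] V) {s : Set V} (hs : Submodule.span K s = ⊤)
    (hf : ∀ x ∈ s, ∃ c : K, c ≠ 0 ∧ f x = c • x) : Function.Bijective f := by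
  obtain ⟨b, hbs, hspan, hli⟩ := exists_linearIndependent K s
  let B : Module.Basis b K V := .mk hli (by simp [hspan, hs])
  choose c hc0 hfc using fun x : b => hf x (hbs x.2)
  let D : V ≃ₗ[K] V := B.equiv (B.isUnitSMul fun x => (hc0 x).isUnit) (Equiv.refl b)
  have hfD : f = D := B.ext fun x => by
    rw [LinearEquiv.coe_coe, B.equiv_apply, Module.Basis.isUnitSMul_apply, Equiv.refl_apply,
      Module.Basis.mk_apply, hfc]
  exact hfD ▸ D.bijective

noncomputable def Icc₀ (a b : ℤ) : Finset ℤ := (Icc a b).filter (· ≠ 0)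

noncomputable def Ioc₀ (a b : ℤ) : Finset ℤ := (Ioc a b).filter (· ≠ 0)

noncomputable def Ioo₀ (a b : ℤ) : Finset ℤ := (Ioo a b).filter (· ≠ 0)

@[simp] lemma mem_Icc₀ {a b m : ℤ} : m ∈ Icc₀ a b ↔ a ≤ m ∧ m ≤ b ∧ m ≠ 0 := by
  simp [Icc₀, and_assoc]

@[simp] lemma mem_Ioc₀ {a b m : ℤ} : m ∈ Ioc₀ a b ↔ a < m ∧ m ≤ b ∧ m ≠ 0 := by
  simp [Ioc₀, and_assoc]

lemma sum_Icc₀_eq_add_sum_Ioc₀ {M : Type*} [AddCommMonoid M] (f : ℤ → M) {a b : ℤ} (ha : a ≠ 0)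
    (hab : a ≤ b) : ∑ m ∈ Icc₀ a b, f m = f a + ∑ m ∈ Ioc₀ a b, f m := by
  rw [← sum_insert (by simp)]
  congr 1
  ext m
  simp only [mem_Icc₀, mem_insert, mem_Ioc₀]
  omega

lemma sum_Ioc₀_sum_Ioc₀_comm {M : Type*} [AddCommMonoid M] (f : ℤ → ℤ → M) (a b : ℤ) :
    ∑ m ∈ Ioc₀ a b, ∑ r ∈ Ioc₀ a m, f m r = ∑ r ∈ Ioc₀ a b, ∑ m ∈ Icc₀ r b, f m r :=
  sum_comm' fun m r => by simp only [mem_Icc₀, mem_Ioc₀]; omega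

lemma inI_neg {n : ℕ} {i : ℤ} (hi : inI n i) : inI n (-i) :=
  ⟨neg_ne_zero.2 hi.1, by rw [abs_neg]; exact hi.2⟩

lemma inI_of_le_of_le {n : ℕ} {i j m : ℤ} (hi : inI n i) (hj : inI n j) (him : i ≤ m)
    (hmj : m ≤ j) (hm : m ≠ 0) : inI n m := by
  have hi' := abs_le.1 hi.2
  have hj' := abs_le.1 hj.2
  exact ⟨hm, abs_le.2 ⟨by omega, by omega⟩⟩

lemma qc_ne_zero : qc ≠ 0 := RatFunc.X_ne_zero

lemma zc_mul_qc_zpow {e a b : ℤ} (ha : a = e + 1) (hb : b = e - 1) :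
    zc * qc ^ e = qc ^ a - qc ^ b := by
  rw [ha, hb, zc, sub_mul, zpow_add_one₀ qc_ne_zero, zpow_sub_one₀ qc_ne_zero]
  ring

lemma pz_eq_zero_or_one (i : ℤ) : pz i = 0 ∨ pz i = 1 := by
  unfold pz
  split <;> simp

lemma pz_of_neg {i : ℤ} (h : i < 0) : pz i = 1 := if_pos h

lemma pz_of_nonneg {i : ℤ} (h : 0 ≤ i) : pz i = 0 := if_neg (not_lt.2 h)

lemma phiz_self (j : ℤ) : phiz j j = if j < 0 then -1 else 1 := if_pos rfl

lemma phiz_self_neg {i : ℤ} (hi : i ≠ 0) : phiz i (-i) = if i < 0 then 1 else -1 := by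
  rw [phiz, if_pos (abs_neg i).symm]
  split_ifs <;> omega

lemma phiz_neg_right_of_ne {i m : ℤ} (hmi : m ≠ i) : phiz m (-i) = phiz i m := by
  simp only [phiz, abs_eq_max_neg]
  split_ifs <;> omega

lemma thz_of_nonneg {a b c : ℤ} (ha : 0 ≤ a) (hbc : 0 ≤ b ∨ 0 ≤ c) : thz a b c = 1 := by
  rcases hbc with h | h <;> simp [thz, pz_of_nonneg, ha, h]

/-- `c(i,m,j)`: the sign is the super-sign produced by `S (u i m * S (u m j))`, the power of `q` the
eigenvalue of `S²` on `u m j`. -/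
noncomputable def twistCoeff (i m j : ℤ) : Kq :=
  (-1) ^ ((pz i + pz m) * (pz m + pz j)) * qc ^ (2 * |j| - 2 * |m|)

lemma twistCoeff_self_left (i j : ℤ) : twistCoeff i i j = qc ^ (2 * |j| - 2 * |i|) := by
  rw [twistCoeff, Even.neg_one_pow ⟨pz i * (pz i + pz j), by ring⟩, one_mul]

lemma twistCoeff_mul_neg_one_pow (i r m j : ℤ) :
    twistCoeff i m j * (-1) ^ ((pz i + pz r) * (pz m + pz j)) = twistCoeff r m j := by
  rw [twistCoeff, twistCoeff, mul_right_comm, ← pow_add,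
    show (pz i + pz m) * (pz m + pz j) + (pz i + pz r) * (pz m + pz j) =
      (pz r + pz m) * (pz m + pz j) + 2 * (pz i * (pz m + pz j)) by ring,
    pow_add, (even_two_mul _).neg_one_pow, mul_one]

lemma twistCoeff_eq_of_neg {i r j : ℤ} (hi : i < 0) (hr : r < 0) (hj : 0 < j) (m : ℤ) :
    twistCoeff i m j = qc ^ (2 * j + 2 * r) * twistCoeff r m (-r) := by
  rcases pz_eq_zero_or_one m with h | h <;>
  · simp only [twistCoeff, pz_of_neg hi, pz_of_neg hr, pz_of_nonneg hj.le,
      pz_of_nonneg (neg_nonneg.2 hr.le), h, abs_of_pos hj, abs_neg, abs_of_neg hr]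
    rw [mul_left_comm, ← zpow_add₀ qc_ne_zero]
    ring_nf

lemma zc_mul_twistCoeff_mul_thz {i m j : ℤ} (him : i < m) (hmj : m < j) (hm : m ≠ 0) :
    zc * (twistCoeff i m j * thz i m m) =
      qc ^ (2 * |j| - |2 * m - 1|) - qc ^ (2 * |j| - |2 * m + 1|) := by
  rcases lt_or_gt_of_ne hm with hm | hm
  · rcases pz_eq_zero_or_one j with hpj | hpj <;>
    · norm_num [twistCoeff, thz, pz_of_neg, hpj, hm, him.trans hm]
      rw [zc_mul_qc_zpow (a := 2 * |j| - |2 * m + 1|) (b := 2 * |j| - |2 * m - 1|)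
        (by grind) (by grind), neg_sub]
  · rcases pz_eq_zero_or_one i with hpi | hpi <;>
    · norm_num [twistCoeff, thz, pz_of_nonneg, hpi, hm.le, (hm.trans hmj).le]
      exact zc_mul_qc_zpow (by grind) (by grind)

lemma twistCoeff_self_mul_qc_zpow_phiz {i j : ℤ} (hi : i ≠ 0) (hj : j ≠ 0) (hij : i < j) :
    twistCoeff i i j * qc ^ phiz i (-i) =
      qc ^ phiz j j + zc * ∑ m ∈ Ioo₀ i j, twistCoeff i m j * thz i m m := by
  -- one primitive serves on both sides of `0`: the missing term `m = 0` matches `F 1 - F 0 = 0`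
  let F : ℤ → Kq := fun m => -qc ^ (2 * |j| - |2 * m - 1|)
  have hsum : zc * ∑ m ∈ Ioo₀ i j, twistCoeff i m j * thz i m m = F (j - 1 + 1) - F (i + 1) := by
    rw [Ioo₀, sum_filter, mul_sum, ← Icc_add_one_sub_one_eq_Ioo]
    refine sum_Icc_telescope (by omega) fun m hm => ?_
    rw [mem_Icc] at hm
    split_ifs with hm0
    · simp only [F]
      rw [zc_mul_twistCoeff_mul_thz (by omega) (by omega) hm0,
        show 2 * (m + 1) - 1 = 2 * m + 1 by ring]
      ring
    · obtain rfl : m = 0 := not_not.1 hm0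
      simp [F]
  have hexp_i : 2 * |j| - 2 * |i| + phiz i (-i) = 2 * |j| - |2 * (i + 1) - 1| := by
    rw [phiz_self_neg hi]; split_ifs <;> grind
  have hexp_j : phiz j j = 2 * |j| - |2 * (j - 1 + 1) - 1| := by
    rw [phiz_self]; split_ifs <;> grind
  rw [hsum, twistCoeff_self_left, ← zpow_add₀ qc_ne_zero, hexp_i, hexp_j]
  ring

section SuperAntihomomorphism

variable {K A : Type*} [Field K] [Ring A] [Algebra K A] {𝒜 : ZMod 2 → Submodule K A}
  {S : A →ₗ[K] A}

lemma sq_eigenvector_mul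
    (hSgr : ∀ (r : ZMod 2) (x : A), x ∈ 𝒜 r → S x ∈ 𝒜 r)
    (hSanti : ∀ (r s : ZMod 2) (x y : A), x ∈ 𝒜 r → y ∈ 𝒜 s →
      S (x * y) = ((-1 : K) ^ (r.val * s.val)) • (S y * S x))
    {r s : ZMod 2} {x y : A} {c d : K} (hx : x ∈ 𝒜 r) (hy : y ∈ 𝒜 s) (hSx : S (S x) = c • x)
    (hSy : S (S y) = d • y) : S (S (x * y)) = (c * d) • (x * y) := by
  rw [hSanti r s x y hx hy, map_smul, hSanti s r _ _ (hSgr s y hy) (hSgr r x hx), smul_smul,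
    ← pow_add, Even.neg_one_pow ⟨r.val * s.val, by ring⟩, one_smul, hSx, hSy,
    smul_mul_smul_comm]

lemma sq_eigenvector_of_mem_closure [GradedAlgebra 𝒜] (hS1 : S 1 = 1)
    (hSgr : ∀ (r : ZMod 2) (x : A), x ∈ 𝒜 r → S x ∈ 𝒜 r)
    (hSanti : ∀ (r s : ZMod 2) (x y : A), x ∈ 𝒜 r → y ∈ 𝒜 s →
      S (x * y) = ((-1 : K) ^ (r.val * s.val)) • (S y * S x))
    {G : Set A} (hG : ∀ x ∈ G, (∃ r, x ∈ 𝒜 r) ∧ ∃ c : K, c ≠ 0 ∧ S (S x) = c • x)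
    {v : A} (hv : v ∈ Submonoid.closure G) :
    (∃ r, v ∈ 𝒜 r) ∧ ∃ c : K, c ≠ 0 ∧ S (S v) = c • v := by
  induction hv using Submonoid.closure_induction with
  | mem x hx => exact hG x hx
  | one => exact ⟨⟨0, SetLike.one_mem_graded 𝒜⟩, 1, one_ne_zero, by rw [hS1, hS1, one_smul]⟩
  | mul x y _ _ ihx ihy =>
    obtain ⟨⟨r, hx⟩, c, hc, hSx⟩ := ihx
    obtain ⟨⟨s, hy⟩, d, hd, hSy⟩ := ihy
    exact ⟨⟨r + s, SetLike.mul_mem_graded hx hy⟩, c * d, mul_ne_zero hc hd,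
      sq_eigenvector_mul hSgr hSanti hx hy hSx hSy⟩

end SuperAntihomomorphism

section Antipode

variable {n : ℕ} {A : Type*} [Ring A] [Algebra Kq A] {u : ℤ → ℤ → A} {S : A →ₗ[Kq] A}

def QueerRelations (n : ℕ) (u : ℤ → ℤ → A) : Prop :=
  ∀ i j k l : ℤ, inI n i → inI n j → inI n k → inI n l → i ≤ j → k ≤ l →
      algebraMap Kq A ((-1) ^ ((pz i + pz j) * (pz k + pz l)) * qc ^ phiz j l) *
          (u i j * u k l)
        + algebraMap Kq A (zc * (if i ≤ l then 1 else 0) * (if k ≤ j ∧ j < l then 1 else 0) *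
            thz i j k) * (u i l * u k j)
        + algebraMap Kq A (zc * (if i ≤ -l ∧ -l < j ∧ j ≤ -k then 1 else 0) *
            thz (-i) (-j) k) * (u i (-l) * u k (-j))
      = algebraMap Kq A (qc ^ phiz i k) * (u k l * u i j)
        + algebraMap Kq A (zc * (if k < i ∧ i ≤ l then 1 else 0) * (if k ≤ j then 1 else 0) *
            thz i j k) * (u i l * u k j)
        + algebraMap Kq A (zc * (if -l ≤ i ∧ i < -k ∧ -k ≤ j then 1 else 0) *
            thz (-i) (-j) k) * (u (-i) l * u (-k) j)

def IsRightAntipode (n : ℕ) (u : ℤ → ℤ → A) (S : A →ₗ[Kq] A) : Prop :=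
  ∀ i j : ℤ, inI n i → inI n j → i ≤ j →
    ∑ m ∈ Icc₀ i j, u i m * S (u m j) = if i = j then 1 else 0

lemma antipode_eq (hinv : ∀ i, inI n i → u (-i) (-i) * u i i = 1)
    (hant : IsRightAntipode n u S) {p m : ℤ} (hp : inI n p) (hm : inI n m) (hpm : p ≤ m) :
    S (u p m) = u (-p) (-p) * ((if p = m then 1 else 0) - ∑ r ∈ Ioc₀ p m, u p r * S (u r m)) := by
  rw [← hant p m hp hm hpm, sum_Icc₀_eq_add_sum_Ioc₀ _ hp.1 hpm, add_sub_cancel_right,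
    ← mul_assoc, hinv p hp, one_mul]

lemma antipode_diag (hinv : ∀ i, inI n i → u (-i) (-i) * u i i = 1)
    (hant : IsRightAntipode n u S) {p : ℤ} (hp : inI n p) : S (u p p) = u (-p) (-p) := by
  simp [antipode_eq hinv hant hp hp le_rfl, Ioc₀]

lemma mul_diag_comm (hrel : QueerRelations n u) {a c k : ℤ} (ha : inI n a) (hc : inI n c)
    (hk : inI n k) (hac : a ≤ c) :
    u a c * u k k = qc ^ (phiz a k - phiz c k) • (u k k * u a c) := by
  have hsign : (-1 : Kq) ^ ((pz a + pz c) * (pz k + pz k)) = 1 :=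
    Even.neg_one_pow ⟨(pz a + pz c) * pz k, by ring⟩
  have h := hrel a c k k ha hc hk hk hac le_rfl
  simp only [show ¬ (k ≤ c ∧ c < k) by omega, show ¬ (k < a ∧ a ≤ k) by omega,
    show ¬ (a ≤ -k ∧ -k < c ∧ c ≤ -k) by omega, show ¬ (-k ≤ a ∧ a < -k ∧ -k ≤ c) by omega,
    if_false, mul_zero, zero_mul, map_zero, add_zero, ← Algebra.smul_def,
    hsign, one_mul] at h
  rw [zpow_sub₀ qc_ne_zero, div_eq_inv_mul, mul_smul, ← h,
    inv_smul_smul₀ (zpow_ne_zero _ qc_ne_zero)]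

lemma exchange_relation (hrel : QueerRelations n u) {i r m j : ℤ} (hi : inI n i) (hr : inI n r)
    (hm : inI n m) (hj : inI n j) (hir : i ≤ r) (hrm : r ≤ m) (hmj : m ≤ j) :
    qc ^ phiz i m • (u m j * u i r) =
      ((-1) ^ ((pz i + pz r) * (pz m + pz j)) * qc ^ phiz r j) • (u i r * u m j)
        + (if r = m ∧ m < j then (zc * thz i r m) • (u i j * u m r) else 0)
        + (if i ≤ -j ∧ -j < r ∧ r ≤ -m then zc • (u i (-j) * u m (-r)) else 0)
        - (if -j ≤ i ∧ i < -m ∧ -m ≤ r then zc • (u (-i) j * u (-m) r) else 0) := by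
  have h := hrel i r m j hi hr hm hj hir hmj
  simp only [if_pos (by omega : i ≤ j), show ¬ (m < i ∧ i ≤ j) by omega,
    show (m ≤ r ∧ r < j) ↔ (r = m ∧ m < j) by omega, if_false, mul_one, mul_zero, zero_mul,
    map_zero, add_zero, ← Algebra.smul_def, mul_ite_one_zero_mul_smul] at h
  convert eq_sub_of_add_eq h.symm using 3
  · split_ifs
    · rw [thz_of_nonneg (by omega) (Or.inl (by omega)), mul_one]
    · rfl
  · rw [thz_of_nonneg (by omega) (Or.inr (by omega)), mul_one]

lemma mul_antipode_diag (hant : IsRightAntipode n u S) {m : ℤ} (hm : inI n m) :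
    u m m * S (u m m) = 1 := by
  simpa [Icc₀, filter_singleton, hm.1] using hant m m hm hm le_rfl

noncomputable def twistedSum (u : ℤ → ℤ → A) (S : A →ₗ[Kq] A) (i j : ℤ) : A :=
  ∑ m ∈ Icc₀ i j, twistCoeff i m j • (u m j * S (u i m))

lemma twistedSum_expand_of_lt (hinv : ∀ i, inI n i → u (-i) (-i) * u i i = 1)
    (hant : IsRightAntipode n u S) (hrel : QueerRelations n u) {i j : ℤ} (hi : inI n i)
    (hj : inI n j) (hij : i < j) :
    twistedSum u S i j = u (-i) (-i) * (qc ^ (-phiz j (-i)) •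
      ((twistCoeff i i j * qc ^ phiz i (-i)) • u i j -
        ∑ m ∈ Ioc₀ i j, ∑ r ∈ Ioc₀ i m,
          twistCoeff i m j • (qc ^ phiz i m • (u m j * u i r) * S (u r m)))) := by
  have hdiag : twistCoeff i i j • (u i j * S (u i i)) =
      u (-i) (-i) * (qc ^ (-phiz j (-i)) • (twistCoeff i i j * qc ^ phiz i (-i)) • u i j) := by
    rw [antipode_diag hinv hant hi, mul_diag_comm hrel hi hj (inI_neg hi) hij.le,
      zpow_sub₀ qc_ne_zero, zpow_neg]
    simp only [smul_smul, mul_smul_comm]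
    congr 1
    ring
  have hoff : ∀ m ∈ Ioc₀ i j, twistCoeff i m j • (u m j * S (u i m)) =
      -(u (-i) (-i) * (qc ^ (-phiz j (-i)) • ∑ r ∈ Ioc₀ i m,
          twistCoeff i m j • (qc ^ phiz i m • (u m j * u i r) * S (u r m)))) := by
    intro m hm
    rw [mem_Ioc₀] at hm
    have hmI := inI_of_le_of_le hi hj hm.1.le hm.2.1 hm.2.2
    rw [antipode_eq hinv hant hi hmI hm.1.le, if_neg hm.1.ne, zero_sub, mul_neg, mul_neg,
      ← mul_assoc, mul_diag_comm hrel hmI hj (inI_neg hi) hm.2.1, phiz_neg_right_of_ne hm.1.ne',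
      zpow_sub₀ qc_ne_zero, zpow_neg]
    simp only [mul_sum, smul_sum, smul_mul_assoc, mul_smul_comm, smul_neg, mul_assoc, smul_smul]
    congr 1
    refine sum_congr rfl fun r _ => ?_
    congr 1
    ring
  rw [twistedSum, sum_Icc₀_eq_add_sum_Ioc₀ _ hi.1 hij.le, hdiag, sum_congr rfl hoff,
    sum_neg_distrib, ← mul_sum, ← smul_sum, ← mul_neg, ← mul_add, smul_sub, sub_eq_add_neg]

lemma twistCoeff_smul_exchange (hrel : QueerRelations n u) {i r m j : ℤ} (hi : inI n i)
    (hr : inI n r) (hm : inI n m) (hj : inI n j) (hir : i ≤ r) (hrm : r ≤ m) (hmj : m ≤ j) :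
    twistCoeff i m j • (qc ^ phiz i m • (u m j * u i r) * S (u r m)) =
      qc ^ phiz r j • (u i r * (twistCoeff r m j • (u m j * S (u r m))))
        + (if r = m ∧ m < j then
            (twistCoeff i m j * (zc * thz i r m)) • (u i j * (u m r * S (u r m))) else 0)
        + (if i ≤ -j ∧ -j < r ∧ r ≤ -m then (zc * qc ^ (2 * j + 2 * r)) •
            (u i (-j) * (twistCoeff r m (-r) • (u m (-r) * S (u r m)))) else 0)
        - (if -j ≤ i ∧ i < -m ∧ -m ≤ r then
            (twistCoeff i m j * zc) • (u (-i) j * (u (-m) r * S (u r m))) else 0) := by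
  rw [exchange_relation hrel hi hr hm hj hir hrm hmj]
  simp only [add_mul, sub_mul, smul_add, smul_sub, ite_mul, zero_mul, smul_ite, smul_zero,
    smul_mul_assoc, mul_smul_comm, smul_smul, mul_assoc]
  congr 2
  · congr 1
    rw [← twistCoeff_mul_neg_one_pow i r m j]
    ring_nf
  · split_ifs with hc
    · have hr0 := hr.1
      rw [twistCoeff_eq_of_neg (show i < 0 by omega) (show r < 0 by omega) (show 0 < j by omega)]
      ring_nf
    · rfl

lemma exchange_sum_leading {i j : ℤ} (hj : j ≠ 0) (hij : i < j)
    (ih : ∀ r, i < r → r ≤ j → r ≠ 0 → twistedSum u S r j = if r = j then 1 else 0) :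
    ∑ m ∈ Ioc₀ i j, ∑ r ∈ Ioc₀ i m,
      qc ^ phiz r j • (u i r * (twistCoeff r m j • (u m j * S (u r m)))) =
      qc ^ phiz j j • u i j := by
  have hinner : ∀ r ∈ Ioc₀ i j, ∑ m ∈ Icc₀ r j,
      qc ^ phiz r j • (u i r * (twistCoeff r m j • (u m j * S (u r m)))) =
      if r = j then qc ^ phiz j j • u i j else 0 := by
    intro r hr
    rw [mem_Ioc₀] at hr
    have h := ih r hr.1 hr.2.1 hr.2.2
    rw [twistedSum] at h
    rw [← smul_sum, ← mul_sum, h]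
    split_ifs with hrj
    · rw [hrj, mul_one]
    · rw [mul_zero, smul_zero]
  rw [sum_Ioc₀_sum_Ioc₀_comm, sum_congr rfl hinner, sum_ite_eq', if_pos]
  simp only [mem_Ioc₀]
  omega

lemma exchange_sum_diagonal (hant : IsRightAntipode n u S) {i j : ℤ} (hi : inI n i)
    (hj : inI n j) :
    ∑ m ∈ Ioc₀ i j, ∑ r ∈ Ioc₀ i m, (if r = m ∧ m < j then
      (twistCoeff i m j * (zc * thz i r m)) • (u i j * (u m r * S (u r m))) else 0) =
      (zc * ∑ m ∈ Ioo₀ i j, twistCoeff i m j * thz i m m) • u i j := by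
  have hinner : ∀ m ∈ Ioc₀ i j, ∑ r ∈ Ioc₀ i m, (if r = m ∧ m < j then
      (twistCoeff i m j * (zc * thz i r m)) • (u i j * (u m r * S (u r m))) else 0) =
      if m < j then (zc * (twistCoeff i m j * thz i m m)) • u i j else 0 := by
    intro m hm
    rw [mem_Ioc₀] at hm
    simp only [ite_and]
    rw [sum_ite_eq', if_pos (by simp only [mem_Ioc₀]; omega)]
    split_ifs
    · rw [mul_antipode_diag hant (inI_of_le_of_le hi hj hm.1.le hm.2.1 hm.2.2), mul_one,
        mul_left_comm]
    · rfl
  rw [sum_congr rfl hinner, sum_ite_eq_sum_of_iff (t := Ioo₀ i j), ← sum_smul, mul_sum]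
  intro m
  simp only [mem_Ioc₀, Ioo₀, mem_filter, mem_Ioo]
  omega

lemma exchange_sum_reflected_eq_zero {i j : ℤ}
    (ih : ∀ r, i < r → r < 0 → -r < j → twistedSum u S r (-r) = 0) :
    ∑ m ∈ Ioc₀ i j, ∑ r ∈ Ioc₀ i m, (if i ≤ -j ∧ -j < r ∧ r ≤ -m then
      (zc * qc ^ (2 * j + 2 * r)) •
        (u i (-j) * (twistCoeff r m (-r) • (u m (-r) * S (u r m)))) else 0) = 0 := by
  rw [sum_Ioc₀_sum_Ioc₀_comm]
  refine sum_eq_zero fun r hr => ?_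
  rw [mem_Ioc₀] at hr
  by_cases hc : i ≤ -j ∧ -j < r ∧ r < 0
  · rw [sum_ite_eq_sum_of_iff (t := Icc₀ r (-r)) _ fun m => by simp only [mem_Icc₀]; omega,
      ← smul_sum, ← mul_sum]
    have h := ih r hr.1 hc.2.2 (by omega)
    rw [twistedSum] at h
    rw [h, mul_zero, smul_zero]
  · refine sum_eq_zero fun m hm => if_neg ?_
    rw [mem_Icc₀] at hm
    omega

lemma exchange_sum_crossed_eq_zero (hant : IsRightAntipode n u S) {i j : ℤ} (hi : inI n i)
    (hj : inI n j) :
    ∑ m ∈ Ioc₀ i j, ∑ r ∈ Ioc₀ i m, (if -j ≤ i ∧ i < -m ∧ -m ≤ r then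
      (twistCoeff i m j * zc) • (u (-i) j * (u (-m) r * S (u r m))) else 0) = 0 := by
  refine sum_eq_zero fun m hm => ?_
  rw [mem_Ioc₀] at hm
  by_cases hc : -j ≤ i ∧ i < -m ∧ 0 < m
  · have hmI := inI_of_le_of_le hi hj hm.1.le hm.2.1 hm.2.2
    rw [sum_ite_eq_sum_of_iff (t := Icc₀ (-m) m) _
        fun r => by simp only [mem_Ioc₀, mem_Icc₀]; omega,
      ← smul_sum, ← mul_sum, hant (-m) m (inI_neg hmI) hmI (by omega), if_neg (by omega),
      mul_zero, smul_zero]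
  · refine sum_eq_zero fun r hr => if_neg ?_
    rw [mem_Ioc₀] at hr
    omega

lemma sum_twistCoeff_smul_exchange (hant : IsRightAntipode n u S) (hrel : QueerRelations n u)
    {i j : ℤ} (hi : inI n i) (hj : inI n j) (hij : i < j)
    (ih : ∀ r l, inI n r → inI n l → r ≤ l → l - r < j - i →
      twistedSum u S r l = if r = l then 1 else 0) :
    ∑ m ∈ Ioc₀ i j, ∑ r ∈ Ioc₀ i m,
        twistCoeff i m j • (qc ^ phiz i m • (u m j * u i r) * S (u r m)) =
      (qc ^ phiz j j + zc * ∑ m ∈ Ioo₀ i j, twistCoeff i m j * thz i m m) • u i j := by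
  have hterm : ∀ m ∈ Ioc₀ i j, ∀ r ∈ Ioc₀ i m, _ := fun m hm r hr => by
    rw [mem_Ioc₀] at hm hr
    have hmI := inI_of_le_of_le hi hj hm.1.le hm.2.1 hm.2.2
    exact twistCoeff_smul_exchange (S := S) hrel hi
      (inI_of_le_of_le hi hmI hr.1.le hr.2.1 hr.2.2) hmI hj hr.1.le hr.2.1 hm.2.1
  simp only [sum_congr rfl fun m hm => sum_congr rfl (hterm m hm), sum_add_distrib, sum_sub_distrib]
  rw [exchange_sum_leading hj.1 hij, exchange_sum_diagonal hant hi hj,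
    exchange_sum_reflected_eq_zero, exchange_sum_crossed_eq_zero hant hi hj, add_zero, sub_zero,
    add_smul]
  · intro r hir hr0 hrj
    have hrI := inI_of_le_of_le hi hj hir.le (by omega) hr0.ne
    rw [ih r (-r) hrI (inI_neg hrI) (by omega) (by omega), if_neg (by omega)]
  · intro r hir hrj hr0
    exact ih r j (inI_of_le_of_le hi hj hir.le hrj hr0) hj hrj (by omega)

theorem twistedSum_eq (hinv : ∀ i, inI n i → u (-i) (-i) * u i i = 1)
    (hant : IsRightAntipode n u S) (hrel : QueerRelations n u) {i j : ℤ} (hi : inI n i)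
    (hj : inI n j) (hij : i ≤ j) : twistedSum u S i j = if i = j then 1 else 0 := by
  induction hN : (j - i).toNat using Nat.strong_induction_on generalizing i j with
  | _ N ih =>
  rcases hij.eq_or_lt with rfl | hlt
  · simp [twistedSum, Icc₀, filter_singleton, hi.1, twistCoeff_self_left,
      mul_antipode_diag hant hi]
  · rw [twistedSum_expand_of_lt hinv hant hrel hi hj hlt,
      sum_twistCoeff_smul_exchange hant hrel hi hj hlt fun r l hr hl hrl hlt' =>
        ih _ (by omega) hr hl hrl rfl,
      ← twistCoeff_self_mul_qc_zpow_phiz hi.1 hj.1 hlt, sub_self, smul_zero, mul_zero,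
      if_neg hlt.ne]

lemma sum_neg_one_pow_smul_antipode_sq_mul (hant : IsRightAntipode n u S)
    {𝒜 : ZMod 2 → Submodule Kq A}
    (hu : ∀ i j : ℤ, inI n i → inI n j → i ≤ j → u i j ∈ 𝒜 (((pz i + pz j : ℕ) : ZMod 2)))
    (hS1 : S 1 = 1) (hSgr : ∀ (r : ZMod 2) (x : A), x ∈ 𝒜 r → S x ∈ 𝒜 r)
    (hSanti : ∀ (r s : ZMod 2) (x y : A), x ∈ 𝒜 r → y ∈ 𝒜 s →
      S (x * y) = ((-1 : Kq) ^ (r.val * s.val)) • (S y * S x))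
    {i j : ℤ} (hi : inI n i) (hj : inI n j) (hij : i ≤ j) :
    ∑ m ∈ Icc₀ i j, (-1 : Kq) ^ ((pz i + pz m) * (pz m + pz j)) • (S (S (u m j)) * S (u i m)) =
      if i = j then 1 else 0 := by
  have h := congrArg S (hant i j hi hj hij)
  rw [map_sum, apply_ite S, hS1, map_zero] at h
  rw [← h]
  refine sum_congr rfl fun m hm => ?_
  rw [mem_Icc₀] at hm
  have hmI := inI_of_le_of_le hi hj hm.1 hm.2.1 hm.2.2
  rw [hSanti _ _ _ _ (hu i m hi hmI hm.1) (hSgr _ _ (hu m j hmI hj hm.2.1)),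
    neg_one_pow_val_natCast_mul_val_natCast]

theorem antipode_antipode_apply (hinv : ∀ i, inI n i → u (-i) (-i) * u i i = 1)
    (hant : IsRightAntipode n u S) (hrel : QueerRelations n u) {𝒜 : ZMod 2 → Submodule Kq A}
    (hu : ∀ i j : ℤ, inI n i → inI n j → i ≤ j → u i j ∈ 𝒜 (((pz i + pz j : ℕ) : ZMod 2)))
    (hS1 : S 1 = 1) (hSgr : ∀ (r : ZMod 2) (x : A), x ∈ 𝒜 r → S x ∈ 𝒜 r)
    (hSanti : ∀ (r s : ZMod 2) (x y : A), x ∈ 𝒜 r → y ∈ 𝒜 s →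
      S (x * y) = ((-1 : Kq) ^ (r.val * s.val)) • (S y * S x))
    {i j : ℤ} (hi : inI n i) (hj : inI n j) (hij : i ≤ j) :
    S (S (u i j)) = qc ^ (2 * |j| - 2 * |i|) • u i j := by
  induction hN : (j - i).toNat using Nat.strong_induction_on generalizing i j with
  | _ N ih =>
  have hS := sum_neg_one_pow_smul_antipode_sq_mul hant hu hS1 hSgr hSanti hi hj hij
  have htw := twistedSum_eq hinv hant hrel hi hj hij
  rw [twistedSum] at htw
  rw [sum_Icc₀_eq_add_sum_Ioc₀ _ hi.1 hij] at hS htw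
  have hoff : ∀ m ∈ Ioc₀ i j,
      (-1 : Kq) ^ ((pz i + pz m) * (pz m + pz j)) • (S (S (u m j)) * S (u i m)) =
        twistCoeff i m j • (u m j * S (u i m)) := fun m hm => by
    rw [mem_Ioc₀] at hm
    rw [ih _ (by omega) (inI_of_le_of_le hi hj hm.1.le hm.2.1 hm.2.2) hj hm.2.1 rfl,
      smul_mul_assoc, smul_smul, twistCoeff]
  rw [sum_congr rfl hoff, ← htw, add_left_inj, Even.neg_one_pow ⟨pz i * (pz i + pz j), by ring⟩,
    one_smul, twistCoeff_self_left] at hS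
  have hdiag : S (u i i) * u i i = 1 := by rw [antipode_diag hinv hant hi, hinv i hi]
  rw [← mul_one (S (S (u i j))), ← hdiag, ← mul_assoc, hS, smul_mul_assoc, mul_assoc, hdiag,
    mul_one]

end Antipode

theorem stmt11_general (n : ℕ) (A : Type*) [Ring A] [Algebra Kq A]
    (𝒜 : ZMod 2 → Submodule Kq A) [GradedAlgebra 𝒜]
    (u : ℤ → ℤ → A) (S : A →ₗ[Kq] A)
    (hinv : ∀ i : ℤ, inI n i →
      u i i * u (-i) (-i) = 1 ∧ u (-i) (-i) * u i i = 1)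
    (hrel : ∀ i j k l : ℤ, inI n i → inI n j → inI n k → inI n l → i ≤ j → k ≤ l →
      algebraMap Kq A ((-1) ^ ((pz i + pz j) * (pz k + pz l)) * qc ^ phiz j l) *
          (u i j * u k l)
        + algebraMap Kq A (zc * (if i ≤ l then 1 else 0) * (if k ≤ j ∧ j < l then 1 else 0) *
            thz i j k) * (u i l * u k j)
        + algebraMap Kq A (zc * (if i ≤ -l ∧ -l < j ∧ j ≤ -k then 1 else 0) *
            thz (-i) (-j) k) * (u i (-l) * u k (-j))
      = algebraMap Kq A (qc ^ phiz i k) * (u k l * u i j)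
        + algebraMap Kq A (zc * (if k < i ∧ i ≤ l then 1 else 0) * (if k ≤ j then 1 else 0) *
            thz i j k) * (u i l * u k j)
        + algebraMap Kq A (zc * (if -l ≤ i ∧ i < -k ∧ -k ≤ j then 1 else 0) *
            thz (-i) (-j) k) * (u (-i) l * u (-k) j))
    (hu : ∀ i j : ℤ, inI n i → inI n j → i ≤ j →
      u i j ∈ 𝒜 (((pz i + pz j : ℕ) : ZMod 2)))
    (hgen : Algebra.adjoin Kq {w : A | ∃ i j : ℤ, inI n i ∧ inI n j ∧ i ≤ j ∧ w = u i j} = ⊤)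
    (hS1 : S 1 = 1)
    (hSgr : ∀ (r : ZMod 2) (x : A), x ∈ 𝒜 r → S x ∈ 𝒜 r)
    (hSanti : ∀ (r s : ZMod 2) (x y : A), x ∈ 𝒜 r → y ∈ 𝒜 s →
      S (x * y) = ((-1 : Kq) ^ (r.val * s.val)) • (S y * S x))
    (hantipode2 : ∀ i j : ℤ, inI n i → inI n j → i ≤ j →
      ∑ m ∈ (Finset.Icc i j).filter (fun m => m ≠ 0), u i m * S (u m j) =
        if i = j then 1 else 0) :
    (∀ i j : ℤ, inI n i → inI n j → i ≤ j →
      S (S (u i j)) = (qc ^ (2 * |j| - 2 * |i|)) • u i j) ∧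
    ∃ T : A →ₗ[Kq] A, T.comp S = LinearMap.id ∧ S.comp T = LinearMap.id ∧
      ∀ i j : ℤ, inI n i → inI n j → i ≤ j →
        T (u i j) = (qc ^ (2 * |i| - 2 * |j|)) • S (u i j) := by
  have hsq : ∀ i j : ℤ, inI n i → inI n j → i ≤ j →
      S (S (u i j)) = qc ^ (2 * |j| - 2 * |i|) • u i j := fun i j hi hj hij =>
    antipode_antipode_apply (fun i hi => (hinv i hi).2) hantipode2 hrel hu hS1 hSgr hSanti hi hj hij
  set G := {w : A | ∃ i j : ℤ, inI n i ∧ inI n j ∧ i ≤ j ∧ w = u i j}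
  have hG : ∀ x ∈ G, (∃ r, x ∈ 𝒜 r) ∧ ∃ c : Kq, c ≠ 0 ∧ S (S x) = c • x := by
    rintro _ ⟨i, j, hi, hj, hij, rfl⟩
    exact ⟨⟨_, hu i j hi hj hij⟩, _, zpow_ne_zero _ qc_ne_zero, hsq i j hi hj hij⟩
  have hspan : Submodule.span Kq (Submonoid.closure G : Set A) = ⊤ := by
    rw [← Algebra.adjoin_eq_span, hgen, Algebra.top_toSubmodule]
  have hS2 : Function.Bijective (S ∘ S) :=
    bijective_of_span_eigenvectors (S.comp S) hspan fun v hv =>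
      (sq_eigenvector_of_mem_closure hS1 hSgr hSanti hG hv).2
  let e := LinearEquiv.ofBijective S ⟨hS2.1.of_comp, hS2.2.of_comp⟩
  refine ⟨hsq, e.symm, LinearMap.ext e.symm_apply_apply, LinearMap.ext e.apply_symm_apply,
    fun i j hi hj hij => ?_⟩
  rw [LinearEquiv.coe_coe, e.symm_apply_eq]
  show u i j = S _
  rw [map_smul, hsq i j hi hj hij, smul_smul, ← zpow_add₀ qc_ne_zero, sub_add_sub_cancel',
    sub_self, zpow_zero, one_smul]

/-- In the quantum isomeric Hopf superalgebra `U_q(q_n)` (encoded by a `ℂ(q)`-superalgebra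
`A`, with `ℤ/2`-grading `𝒜`, generated by elements `u i j` satisfying the defining
relations, together with a linear antipode `S` which is a parity-preserving super-algebra
antihomomorphism satisfying the antipode identities coming from `L⁻¹`):
`S²(u_{ij}) = q^{2|j| - 2|i|} u_{ij}` for all generators, and consequently `S` is invertible
with `S⁻¹(u_{ij}) = q^{2|i| - 2|j|} S(u_{ij})`. -/
theorem stmt11 (n : ℕ) (A : Type*) [Ring A] [Algebra Kq A]
    (𝒜 : ZMod 2 → Submodule Kq A) [GradedAlgebra 𝒜]
    (u : ℤ → ℤ → A) (S : A →ₗ[Kq] A)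
    (hinv : ∀ i : ℤ, inI n i →
      u i i * u (-i) (-i) = 1 ∧ u (-i) (-i) * u i i = 1)
    (hrel : ∀ i j k l : ℤ, inI n i → inI n j → inI n k → inI n l → i ≤ j → k ≤ l →
      algebraMap Kq A ((-1) ^ ((pz i + pz j) * (pz k + pz l)) * qc ^ phiz j l) *
          (u i j * u k l)
        + algebraMap Kq A (zc * (if i ≤ l then 1 else 0) * (if k ≤ j ∧ j < l then 1 else 0) *
            thz i j k) * (u i l * u k j)
        + algebraMap Kq A (zc * (if i ≤ -l ∧ -l < j ∧ j ≤ -k then 1 else 0) *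
            thz (-i) (-j) k) * (u i (-l) * u k (-j))
      = algebraMap Kq A (qc ^ phiz i k) * (u k l * u i j)
        + algebraMap Kq A (zc * (if k < i ∧ i ≤ l then 1 else 0) * (if k ≤ j then 1 else 0) *
            thz i j k) * (u i l * u k j)
        + algebraMap Kq A (zc * (if -l ≤ i ∧ i < -k ∧ -k ≤ j then 1 else 0) *
            thz (-i) (-j) k) * (u (-i) l * u (-k) j))
    (hu : ∀ i j : ℤ, inI n i → inI n j → i ≤ j →
      u i j ∈ 𝒜 (((pz i + pz j : ℕ) : ZMod 2)))
    (hgen : Algebra.adjoin Kq {w : A | ∃ i j : ℤ, inI n i ∧ inI n j ∧ i ≤ j ∧ w = u i j} = ⊤)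
    (hS1 : S 1 = 1)
    (hSgr : ∀ (r : ZMod 2) (x : A), x ∈ 𝒜 r → S x ∈ 𝒜 r)
    (hSanti : ∀ (r s : ZMod 2) (x y : A), x ∈ 𝒜 r → y ∈ 𝒜 s →
      S (x * y) = ((-1 : Kq) ^ (r.val * s.val)) • (S y * S x))
    (hantipode1 : ∀ i j : ℤ, inI n i → inI n j → i ≤ j →
      ∑ m ∈ (Finset.Icc i j).filter (fun m => m ≠ 0), S (u i m) * u m j =
        if i = j then 1 else 0)
    (hantipode2 : ∀ i j : ℤ, inI n i → inI n j → i ≤ j →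
      ∑ m ∈ (Finset.Icc i j).filter (fun m => m ≠ 0), u i m * S (u m j) =
        if i = j then 1 else 0) :
    (∀ i j : ℤ, inI n i → inI n j → i ≤ j →
      S (S (u i j)) = (qc ^ (2 * |j| - 2 * |i|)) • u i j) ∧
    ∃ T : A →ₗ[Kq] A, T.comp S = LinearMap.id ∧ S.comp T = LinearMap.id ∧
      ∀ i j : ℤ, inI n i → inI n j → i ≤ j →
        T (u i j) = (qc ^ (2 * |i| - 2 * |j|)) • S (u i j) :=
  stmt11_general n A 𝒜 u S hinv hrel hu hgen hS1 hSgr hSanti hantipode2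
end

section
/- Let AHC_r(z) be the affine Hecke–Clifford superalgebra with even generators t_1,...,t_{r-1} and odd generators c_1,...,c_r, ϖ_1,...,ϖ_r. Then there is a superalgebra automorphism of AHC_r(z) given by c_i ↦ ϖ_i, ϖ_i ↦ c_i, t_j ↦ -t_j^{-1}. -/
/-- Generators of the affine Hecke–Clifford superalgebra `AHC_r(z)`:
even generators `t_1,…,t_{r-1}` (with `t i` denoting `t_{i+1}` for `i : Fin (r-1)`)
and odd generators `c_1,…,c_r` and `ϖ_1,…,ϖ_r`. -/
inductive AHCGen (r : ℕ) : Type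
  | t : Fin (r - 1) → AHCGen r
  | c : Fin r → AHCGen r
  | w : Fin r → AHCGen r

/-- The index `i` viewed in `Fin r`. -/
def finLo {r : ℕ} (i : Fin (r - 1)) : Fin r := ⟨i.val, by have := i.isLt; omega⟩

/-- The index `i+1` viewed in `Fin r`. -/
def finHi {r : ℕ} (i : Fin (r - 1)) : Fin r := ⟨i.val + 1, by have := i.isLt; omega⟩

/-- The generator `x` as an element of the free algebra. -/
def G (k : Type*) [CommRing k] {r : ℕ} (x : AHCGen r) : FreeAlgebra k (AHCGen r) :=
  FreeAlgebra.ι k x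

/-- The defining relations of the affine Hecke–Clifford superalgebra `AHC_r(z)`:
`t_i² = z t_i + 1`; `c_i² = -1`, `c_i c_j = -c_j c_i` (i ≠ j); `ϖ_i² = -1`,
`ϖ_i ϖ_j = -ϖ_j ϖ_i` (i ≠ j); `t_i c_i = c_{i+1} t_i`, `t_i c_j = c_j t_i` (j ≠ i, i+1);
`t_i ϖ_{i+1} = ϖ_i t_i`, `t_i ϖ_j = ϖ_j t_i` (j ≠ i, i+1); and no relation between the
`c`'s and the `ϖ`'s. -/
inductive AHCRel (k : Type*) [CommRing k] (z : k) (r : ℕ) :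
    FreeAlgebra k (AHCGen r) → FreeAlgebra k (AHCGen r) → Prop
  | t_sq (i : Fin (r - 1)) :
      AHCRel k z r (G k (.t i) * G k (.t i)) (z • G k (.t i) + 1)
  | c_sq (i : Fin r) : AHCRel k z r (G k (.c i) * G k (.c i)) (-1)
  | c_anti (i j : Fin r) (h : i ≠ j) :
      AHCRel k z r (G k (.c i) * G k (.c j)) (-(G k (.c j) * G k (.c i)))
  | w_sq (i : Fin r) : AHCRel k z r (G k (.w i) * G k (.w i)) (-1)
  | w_anti (i j : Fin r) (h : i ≠ j) :
      AHCRel k z r (G k (.w i) * G k (.w j)) (-(G k (.w j) * G k (.w i)))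
  | t_c (i : Fin (r - 1)) :
      AHCRel k z r (G k (.t i) * G k (.c (finLo i))) (G k (.c (finHi i)) * G k (.t i))
  | t_c_far (i : Fin (r - 1)) (j : Fin r) (h1 : j ≠ finLo i) (h2 : j ≠ finHi i) :
      AHCRel k z r (G k (.t i) * G k (.c j)) (G k (.c j) * G k (.t i))
  | t_w (i : Fin (r - 1)) :
      AHCRel k z r (G k (.t i) * G k (.w (finHi i))) (G k (.w (finLo i)) * G k (.t i))
  | t_w_far (i : Fin (r - 1)) (j : Fin r) (h1 : j ≠ finLo i) (h2 : j ≠ finHi i) :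
      AHCRel k z r (G k (.t i) * G k (.w j)) (G k (.w j) * G k (.t i))

/-- The affine Hecke–Clifford superalgebra `AHC_r(z)`. -/
abbrev AHCalg (k : Type*) [CommRing k] (z : k) (r : ℕ) := RingQuot (AHCRel k z r)

/-- The generator `x` as an element of `AHC_r(z)`. -/
def ahcg (k : Type*) [CommRing k] (z : k) {r : ℕ} (x : AHCGen r) : AHCalg k z r :=
  RingQuot.mkAlgHom k (AHCRel k z r) (G k x)

/-!
From `t² = z t + 1` the generator `t` is a unit with `t⁻¹ = t - z`, and `-t⁻¹` satisfies
the same quadratic relation. Inverting `t` turns a relation `t x = y t` into `t⁻¹ y = x t⁻¹`: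
this exchanges `t_i c_i = c_{i+1} t_i` with `t_i ϖ_{i+1} = ϖ_i t_i`, so swapping `c` and `ϖ`
while sending `t ↦ -t⁻¹` respects the defining relations. The resulting endomorphism is an involution.
-/

section HeckeQuadratic

variable {k A : Type*} [CommRing k] [Ring A] [Algebra k A] {z : k} {a : A}

theorem mul_sub_algebraMap_of_mul_self_eq (h : a * a = z • a + 1) :
    a * (a - algebraMap k A z) = 1 := by
  rw [mul_sub, h, Algebra.smul_def, ← Algebra.commutes]
  abel

theorem sub_algebraMap_mul_of_mul_self_eq (h : a * a = z • a + 1) :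
    (a - algebraMap k A z) * a = 1 := by
  rw [sub_mul, h, Algebra.smul_def]
  abel

def unitOfMulSelfEq (h : a * a = z • a + 1) : Aˣ :=
  ⟨a, a - algebraMap k A z, mul_sub_algebraMap_of_mul_self_eq h,
    sub_algebraMap_mul_of_mul_self_eq h⟩

theorem neg_sub_algebraMap_mul_self_eq (h : a * a = z • a + 1) :
    -(a - algebraMap k A z) * -(a - algebraMap k A z) = z • -(a - algebraMap k A z) + 1 := by
  rw [neg_mul_neg, sub_mul, mul_sub, mul_sub, h, Algebra.smul_def, Algebra.smul_def, mul_neg,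
    mul_sub, ← Algebra.commutes]
  abel

theorem SemiconjBy.neg_sub_algebraMap_symm {x y : A} (h : a * a = z • a + 1)
    (hs : SemiconjBy a x y) : SemiconjBy (-(a - algebraMap k A z)) y x :=
  (hs.units_inv_symm_left (a := unitOfMulSelfEq h)).neg_left

end HeckeQuadratic

namespace AHCalg

variable (k : Type*) [CommRing k] (z : k) {r : ℕ}

theorem t_mul_self (i : Fin (r - 1)) :
    ahcg k z (.t i) * ahcg k z (.t i) = z • ahcg k z (.t i) + 1 := by
  simpa [ahcg] using RingQuot.mkAlgHom_rel k (.t_sq i : AHCRel k z r _ _)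

theorem c_mul_self (i : Fin r) : ahcg k z (.c i) * ahcg k z (.c i) = -1 := by
  simpa [ahcg] using RingQuot.mkAlgHom_rel k (.c_sq i : AHCRel k z r _ _)

theorem c_mul_c {i j : Fin r} (h : i ≠ j) :
    ahcg k z (.c i) * ahcg k z (.c j) = -(ahcg k z (.c j) * ahcg k z (.c i)) := by
  simpa [ahcg] using RingQuot.mkAlgHom_rel k (.c_anti i j h : AHCRel k z r _ _)

theorem w_mul_self (i : Fin r) : ahcg k z (.w i) * ahcg k z (.w i) = -1 := by
  simpa [ahcg] using RingQuot.mkAlgHom_rel k (.w_sq i : AHCRel k z r _ _)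

theorem w_mul_w {i j : Fin r} (h : i ≠ j) :
    ahcg k z (.w i) * ahcg k z (.w j) = -(ahcg k z (.w j) * ahcg k z (.w i)) := by
  simpa [ahcg] using RingQuot.mkAlgHom_rel k (.w_anti i j h : AHCRel k z r _ _)

theorem semiconjBy_t_c (i : Fin (r - 1)) :
    SemiconjBy (ahcg k z (.t i)) (ahcg k z (.c (finLo i))) (ahcg k z (.c (finHi i))) := by
  simpa [SemiconjBy, ahcg] using RingQuot.mkAlgHom_rel k (.t_c i : AHCRel k z r _ _)

theorem commute_t_c {i : Fin (r - 1)} {j : Fin r} (h1 : j ≠ finLo i) (h2 : j ≠ finHi i) :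
    Commute (ahcg k z (.t i)) (ahcg k z (.c j)) := by
  simpa [Commute, SemiconjBy, ahcg] using
    RingQuot.mkAlgHom_rel k (.t_c_far i j h1 h2 : AHCRel k z r _ _)

theorem semiconjBy_t_w (i : Fin (r - 1)) :
    SemiconjBy (ahcg k z (.t i)) (ahcg k z (.w (finHi i))) (ahcg k z (.w (finLo i))) := by
  simpa [SemiconjBy, ahcg] using RingQuot.mkAlgHom_rel k (.t_w i : AHCRel k z r _ _)

theorem commute_t_w {i : Fin (r - 1)} {j : Fin r} (h1 : j ≠ finLo i) (h2 : j ≠ finHi i) :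
    Commute (ahcg k z (.t i)) (ahcg k z (.w j)) := by
  simpa [Commute, SemiconjBy, ahcg] using
    RingQuot.mkAlgHom_rel k (.t_w_far i j h1 h2 : AHCRel k z r _ _)

variable (r)

noncomputable def swapGen : AHCGen r → AHCalg k z r
  | .t j => -(ahcg k z (.t j) - algebraMap k (AHCalg k z r) z)
  | .c i => ahcg k z (.w i)
  | .w i => ahcg k z (.c i)

theorem lift_swapGen_eq_of_rel ⦃a b : FreeAlgebra k (AHCGen r)⦄ (h : AHCRel k z r a b) :
    FreeAlgebra.lift k (swapGen k z r) a = FreeAlgebra.lift k (swapGen k z r) b := by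
  induction h with
  | t_sq i =>
    simp only [G, map_mul, map_add, map_smul, map_one, FreeAlgebra.lift_ι_apply, swapGen]
    exact neg_sub_algebraMap_mul_self_eq (t_mul_self k z i)
  | c_sq i => simpa [G, swapGen] using w_mul_self k z i
  | c_anti i j h => simpa [G, swapGen] using w_mul_w k z h
  | w_sq i => simpa [G, swapGen] using c_mul_self k z i
  | w_anti i j h => simpa [G, swapGen] using c_mul_c k z h
  | t_c i =>
    simp only [G, map_mul, FreeAlgebra.lift_ι_apply, swapGen]
    exact (semiconjBy_t_w k z i).neg_sub_algebraMap_symm (t_mul_self k z i)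
  | t_c_far i j h1 h2 =>
    simp only [G, map_mul, FreeAlgebra.lift_ι_apply, swapGen]
    exact (commute_t_w k z h1 h2).neg_sub_algebraMap_symm (t_mul_self k z i)
  | t_w i =>
    simp only [G, map_mul, FreeAlgebra.lift_ι_apply, swapGen]
    exact (semiconjBy_t_c k z i).neg_sub_algebraMap_symm (t_mul_self k z i)
  | t_w_far i j h1 h2 =>
    simp only [G, map_mul, FreeAlgebra.lift_ι_apply, swapGen]
    exact (commute_t_c k z h1 h2).neg_sub_algebraMap_symm (t_mul_self k z i)

noncomputable def swapHom : AHCalg k z r →ₐ[k] AHCalg k z r :=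
  RingQuot.liftAlgHom k ⟨FreeAlgebra.lift k (swapGen k z r), lift_swapGen_eq_of_rel k z r⟩

theorem swapHom_ahcg (x : AHCGen r) : swapHom k z r (ahcg k z x) = swapGen k z r x := by
  rw [ahcg, swapHom, RingQuot.liftAlgHom_mkAlgHom_apply, G, FreeAlgebra.lift_ι_apply]

theorem swapHom_comp_swapHom : (swapHom k z r).comp (swapHom k z r) = AlgHom.id k _ := by
  refine RingQuot.ringQuot_ext' _ _ _ (FreeAlgebra.hom_ext (funext fun x => ?_))
  change swapHom k z r (swapHom k z r (ahcg k z x)) = ahcg k z x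
  cases x <;> simp [swapHom_ahcg, swapGen]

noncomputable def swapEquiv : AHCalg k z r ≃ₐ[k] AHCalg k z r :=
  AlgEquiv.ofAlgHom (swapHom k z r) (swapHom k z r) (swapHom_comp_swapHom k z r)
    (swapHom_comp_swapHom k z r)

end AHCalg

theorem stmt13_general (k : Type*) [CommRing k] (z : k) (r : ℕ) :
    ∃ f : AHCalg k z r ≃ₐ[k] AHCalg k z r,
      (∀ i : Fin r, f (ahcg k z (.c i)) = ahcg k z (.w i)) ∧
      (∀ i : Fin r, f (ahcg k z (.w i)) = ahcg k z (.c i)) ∧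
      (∀ j : Fin (r - 1),
        f (ahcg k z (.t j)) = -(ahcg k z (.t j) - algebraMap k (AHCalg k z r) z)) :=
  ⟨AHCalg.swapEquiv k z r, fun i => AHCalg.swapHom_ahcg k z r (.c i),
    fun i => AHCalg.swapHom_ahcg k z r (.w i), fun j => AHCalg.swapHom_ahcg k z r (.t j)⟩

/-- There is a superalgebra automorphism of `AHC_r(z)` sending `c_i ↦ ϖ_i`, `ϖ_i ↦ c_i`
and `t_j ↦ -t_j⁻¹`.  (Recall `t_j⁻¹ = t_j - z`, so `-t_j⁻¹ = -(t_j - z)`.) -/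
theorem stmt13 (k : Type*) [CommRing k] (hk : ringChar k ≠ 2) (z : k) (r : ℕ) :
    ∃ f : AHCalg k z r ≃ₐ[k] AHCalg k z r,
      (∀ i : Fin r, f (ahcg k z (.c i)) = ahcg k z (.w i)) ∧
      (∀ i : Fin r, f (ahcg k z (.w i)) = ahcg k z (.c i)) ∧
      (∀ j : Fin (r - 1),
        f (ahcg k z (.t j)) = -(ahcg k z (.t j) - algebraMap k (AHCalg k z r) z)) :=
  stmt13_general k z r
end

section
/- In the affine Hecke–Clifford superalgebra AHC_r(z), the elements x_i := c_i ϖ_i (1 ≤ i ≤ r) are even, pairwise commuting, invertible with x_i^{-1} = ϖ_i c_i, and satisfy c_i x_i = x_i^{-1} c_i, t_i x_i = x_{i+1} t_i - z(x_{i+1} - c_i c_{i+1} x_i), and t_i x_{i+1} = x_i t_i + z(1 + c_i c_{i+1}) x_{i+1}. -/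
/-!
Each identity is a local computation among at most four generators. Evenness and invertibility
of `x_i = c_i ϖ_i` hold because `c_i`, `ϖ_i` are odd square roots of `-1`; commutativity of
`x_i` and `x_j` follows because each of the four pairs of odd factors anticommutes. For the
mixed relations, the quadratic relation makes `t_i` invertible with inverse `t_i - z`, so
`t_i b = a t_i` can be turned around to `t_i a = b t_i + z (a - b)`; applying this to
`ϖ_{i+1} ↦ ϖ_i` and `c_i ↦ c_{i+1}` gives the two formulas.
-/

section OddElements

variable {A : Type*} [Ring A]

theorem map_mul_eq_self_of_map_eq_neg {σ : A →+* A} {a b : A} (ha : σ a = -a) (hb : σ b = -b) :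
    σ (a * b) = a * b := by
  rw [map_mul, ha, hb, neg_mul_neg]

theorem mul_mul_mul_rev_eq_one {a b : A} (ha : a * a = -1) (hb : b * b = -1) :
    a * b * (b * a) = 1 := by
  calc a * b * (b * a) = a * (b * b) * a := by noncomm_ring
    _ = 1 := by rw [hb, mul_neg_one, neg_mul, ha, neg_neg]

theorem mul_mul_eq_mul_rev_mul {a b : A} (ha : a * a = -1) : a * (a * b) = b * a * a := by
  rw [← mul_assoc, ha, mul_assoc, ha, neg_one_mul, mul_neg_one]

theorem commute_mul_of_anticommute {a b c d : A}
    (hac : a * c = -(c * a)) (had : a * d = -(d * a))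
    (hbc : b * c = -(c * b)) (hbd : b * d = -(d * b)) :
    a * b * (c * d) = c * d * (a * b) := by
  calc a * b * (c * d) = a * (b * c) * d := by noncomm_ring
    _ = -(a * c * (b * d)) := by rw [hbc]; noncomm_ring
    _ = -(c * a * (d * b)) := by rw [hac, hbd]; noncomm_ring
    _ = -(c * (a * d) * b) := by noncomm_ring
    _ = c * d * (a * b) := by rw [had]; noncomm_ring

end OddElements

section HeckeGenerator

variable {k A : Type*} [CommSemiring k] [Ring A] [Algebra k A] {z : k} {t : A}

theorem hecke_mul_sub_smul_one (ht : t * t = z • t + 1) : t * (t - z • 1) = 1 := by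
  rw [mul_sub, ht, mul_smul_comm, mul_one, add_sub_cancel_left]

theorem hecke_mul_eq_of_mul_eq {a b : A} (ht : t * t = z • t + 1) (h : t * b = a * t) :
    t * a = b * t + z • (a - b) := by
  have ha : a = t * b * (t - z • 1) := by rw [h, mul_assoc, hecke_mul_sub_smul_one ht, mul_one]
  calc t * a = (t * t) * (b * (t - z • 1)) := by rw [ha]; noncomm_ring
    _ = z • (t * b * (t - z • 1)) + b * t - z • b := by
      rw [ht]
      simp only [add_mul, one_mul, smul_mul_assoc, mul_sub, mul_smul_comm, mul_one, mul_assoc,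
        smul_sub, smul_add]
      abel
    _ = b * t + z • (a - b) := by rw [← ha, smul_sub]; abel

variable {c c' w w' : A}

theorem hecke_mul_clifford_left (ht : t * t = z • t + 1) (htc : t * c = c' * t)
    (htw : t * w' = w * t) (hc : c * c = -1) (hcc' : c * c' = -(c' * c)) :
    t * (c * w) = c' * w' * t - z • (c' * w' - c * c' * (c * w)) := by
  have hccw : c * c' * (c * w) = c' * w := by
    calc c * c' * (c * w) = -(c' * ((c * c) * w)) := by rw [hcc']; noncomm_ring
      _ = c' * w := by rw [hc, neg_one_mul, mul_neg, neg_neg]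
  calc t * (c * w) = c' * (t * w) := by rw [← mul_assoc, htc, mul_assoc]
    _ = c' * (w' * t + z • (w - w')) := by rw [hecke_mul_eq_of_mul_eq ht htw]
    _ = c' * w' * t - z • (c' * w' - c * c' * (c * w)) := by
      rw [hccw, mul_add, mul_smul_comm, mul_sub, ← mul_assoc, smul_sub, smul_sub]
      abel

theorem hecke_mul_clifford_right (ht : t * t = z • t + 1) (htc : t * c = c' * t)
    (htw : t * w' = w * t) (hc' : c' * c' = -1) :
    t * (c' * w') = c * w * t + z • ((1 + c * c') * (c' * w')) := by
  have hccw : (1 + c * c') * (c' * w') = c' * w' - c * w' := by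
    calc (1 + c * c') * (c' * w') = c' * w' + c * ((c' * c') * w') := by noncomm_ring
      _ = c' * w' - c * w' := by rw [hc', neg_one_mul, mul_neg, sub_eq_add_neg]
  calc t * (c' * w') = (c * t + z • (c' - c)) * w' := by
        rw [← mul_assoc, hecke_mul_eq_of_mul_eq ht htc]
    _ = c * w * t + z • ((1 + c * c') * (c' * w')) := by
      rw [hccw, add_mul, mul_assoc, htw, smul_mul_assoc, sub_mul, ← mul_assoc]

end HeckeGenerator

theorem stmt14_general (k : Type*) [CommRing k]
    (A : Type*) [Ring A] [Algebra k A] (z : k) (r : ℕ)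
    (t c w : ℕ → A) (σ : A →+* A)
    (ht : ∀ i, 1 ≤ i → i ≤ r - 1 → t i * t i = z • t i + 1)
    (hc2 : ∀ i, 1 ≤ i → i ≤ r → c i * c i = -1)
    (hcc : ∀ i j, 1 ≤ i → i ≤ r → 1 ≤ j → j ≤ r → i ≠ j → c i * c j = -(c j * c i))
    (hw2 : ∀ i, 1 ≤ i → i ≤ r → w i * w i = -1)
    (hww : ∀ i j, 1 ≤ i → i ≤ r → 1 ≤ j → j ≤ r → i ≠ j → w i * w j = -(w j * w i))
    (htc : ∀ i, 1 ≤ i → i ≤ r - 1 → t i * c i = c (i + 1) * t i)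
    (htw : ∀ i, 1 ≤ i → i ≤ r - 1 → t i * w (i + 1) = w i * t i)
    (hcw : ∀ i j, 1 ≤ i → i ≤ r → 1 ≤ j → j ≤ r → i ≠ j → c i * w j = -(w j * c i))
    (hσc : ∀ i, 1 ≤ i → i ≤ r → σ (c i) = -(c i))
    (hσw : ∀ i, 1 ≤ i → i ≤ r → σ (w i) = -(w i)) :
    -- `x i = c i * w i` is even
    (∀ i, 1 ≤ i → i ≤ r → σ (c i * w i) = c i * w i) ∧
    -- invertible with inverse `w i * c i`
    (∀ i, 1 ≤ i → i ≤ r →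
      (c i * w i) * (w i * c i) = 1 ∧ (w i * c i) * (c i * w i) = 1) ∧
    -- pairwise commuting
    (∀ i j, 1 ≤ i → i ≤ r → 1 ≤ j → j ≤ r → i ≠ j →
      (c i * w i) * (c j * w j) = (c j * w j) * (c i * w i)) ∧
    -- `c_i x_i = x_i⁻¹ c_i`
    (∀ i, 1 ≤ i → i ≤ r → c i * (c i * w i) = (w i * c i) * c i) ∧
    -- `t_i x_i = x_{i+1} t_i - z (x_{i+1} - c_i c_{i+1} x_i)`
    (∀ i, 1 ≤ i → i ≤ r - 1 →
      t i * (c i * w i) =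
        (c (i + 1) * w (i + 1)) * t i -
          z • ((c (i + 1) * w (i + 1)) - c i * c (i + 1) * (c i * w i))) ∧
    -- `t_i x_{i+1} = x_i t_i + z (1 + c_i c_{i+1}) x_{i+1}`
    (∀ i, 1 ≤ i → i ≤ r - 1 →
      t i * (c (i + 1) * w (i + 1)) =
        (c i * w i) * t i +
          z • ((1 + c i * c (i + 1)) * (c (i + 1) * w (i + 1)))) := by
  refine ⟨fun i h1 h2 => map_mul_eq_self_of_map_eq_neg (hσc i h1 h2) (hσw i h1 h2),
    fun i h1 h2 => ⟨mul_mul_mul_rev_eq_one (hc2 i h1 h2) (hw2 i h1 h2),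
      mul_mul_mul_rev_eq_one (hw2 i h1 h2) (hc2 i h1 h2)⟩,
    fun i j h1 h2 h3 h4 hij => ?_,
    fun i h1 h2 => mul_mul_eq_mul_rev_mul (hc2 i h1 h2),
    fun i h1 h2 => ?_, fun i h1 h2 => ?_⟩
  · have hwc : w i * c j = -(c j * w i) := by rw [hcw j i h3 h4 h1 h2 hij.symm, neg_neg]
    exact commute_mul_of_anticommute (hcc i j h1 h2 h3 h4 hij) (hcw i j h1 h2 h3 h4 hij) hwc
      (hww i j h1 h2 h3 h4 hij)
  · exact hecke_mul_clifford_left (ht i h1 h2) (htc i h1 h2) (htw i h1 h2) (hc2 i h1 (by omega))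
      (hcc i (i + 1) h1 (by omega) (by omega) (by omega) (by omega))
  · exact hecke_mul_clifford_right (ht i h1 h2) (htc i h1 h2) (htw i h1 h2)
      (hc2 (i + 1) (by omega) (by omega))

/-- In the affine Hecke–Clifford superalgebra `AHC_r(z)` (encoded by an arbitrary
`k`-algebra with elements `t i` (1 ≤ i ≤ r-1), `c i`, `w i` (= ϖ_i, 1 ≤ i ≤ r)
satisfying the defining relations, with the parity automorphism `σ` recording that the
`c i` and `w i` are odd), the elements `x i := c i * w i` are even, pairwise commuting,
invertible with `x i⁻¹ = w i * c i`, and satisfy `c_i x_i = x_i⁻¹ c_i`,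
`t_i x_i = x_{i+1} t_i - z (x_{i+1} - c_i c_{i+1} x_i)`, and
`t_i x_{i+1} = x_i t_i + z (1 + c_i c_{i+1}) x_{i+1}`. -/
theorem stmt14 (k : Type*) [CommRing k] (hk : ringChar k ≠ 2)
    (A : Type*) [Ring A] [Algebra k A] (z : k) (r : ℕ)
    (t c w : ℕ → A) (σ : A →+* A)
    (ht : ∀ i, 1 ≤ i → i ≤ r - 1 → t i * t i = z • t i + 1)
    (hc2 : ∀ i, 1 ≤ i → i ≤ r → c i * c i = -1)
    (hcc : ∀ i j, 1 ≤ i → i ≤ r → 1 ≤ j → j ≤ r → i ≠ j → c i * c j = -(c j * c i))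
    (hw2 : ∀ i, 1 ≤ i → i ≤ r → w i * w i = -1)
    (hww : ∀ i j, 1 ≤ i → i ≤ r → 1 ≤ j → j ≤ r → i ≠ j → w i * w j = -(w j * w i))
    (htc : ∀ i, 1 ≤ i → i ≤ r - 1 → t i * c i = c (i + 1) * t i)
    (htcf : ∀ i j, 1 ≤ i → i ≤ r - 1 → 1 ≤ j → j ≤ r → j ≠ i → j ≠ i + 1 →
      t i * c j = c j * t i)
    (htw : ∀ i, 1 ≤ i → i ≤ r - 1 → t i * w (i + 1) = w i * t i)
    (htwf : ∀ i j, 1 ≤ i → i ≤ r - 1 → 1 ≤ j → j ≤ r → j ≠ i → j ≠ i + 1 →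
      t i * w j = w j * t i)
    (hcw : ∀ i j, 1 ≤ i → i ≤ r → 1 ≤ j → j ≤ r → i ≠ j → c i * w j = -(w j * c i))
    (hσc : ∀ i, 1 ≤ i → i ≤ r → σ (c i) = -(c i))
    (hσw : ∀ i, 1 ≤ i → i ≤ r → σ (w i) = -(w i)) :
    -- `x i = c i * w i` is even
    (∀ i, 1 ≤ i → i ≤ r → σ (c i * w i) = c i * w i) ∧
    -- invertible with inverse `w i * c i`
    (∀ i, 1 ≤ i → i ≤ r →
      (c i * w i) * (w i * c i) = 1 ∧ (w i * c i) * (c i * w i) = 1) ∧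
    -- pairwise commuting
    (∀ i j, 1 ≤ i → i ≤ r → 1 ≤ j → j ≤ r → i ≠ j →
      (c i * w i) * (c j * w j) = (c j * w j) * (c i * w i)) ∧
    -- `c_i x_i = x_i⁻¹ c_i`
    (∀ i, 1 ≤ i → i ≤ r → c i * (c i * w i) = (w i * c i) * c i) ∧
    -- `t_i x_i = x_{i+1} t_i - z (x_{i+1} - c_i c_{i+1} x_i)`
    (∀ i, 1 ≤ i → i ≤ r - 1 →
      t i * (c i * w i) =
        (c (i + 1) * w (i + 1)) * t i -
          z • ((c (i + 1) * w (i + 1)) - c i * c (i + 1) * (c i * w i))) ∧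
    -- `t_i x_{i+1} = x_i t_i + z (1 + c_i c_{i+1}) x_{i+1}`
    (∀ i, 1 ≤ i → i ≤ r - 1 →
      t i * (c (i + 1) * w (i + 1)) =
        (c i * w i) * t i +
          z • ((1 + c i * c (i + 1)) * (c (i + 1) * w (i + 1)))) :=
  stmt14_general k A z r t c w σ ht hc2 hcc hw2 hww htc htw hcw hσc hσw
end

section
/- The ring homomorphism β from the ring of symmetric functions Sym to a commutative ring R is well defined when one specifies images E_r of e_r and H_r of h_r (r ≥ 1, with E_0 = H_0 = 1) satisfying Σ_{r=0}^{k} (-1)^r E_{k-r} H_r = 0 for all k > 0. Concretely: if elements b_{2k} ∈ R (k ≥ 1) satisfy b_{2k}' - b_{2k} = z Σ_{r=1}^{k-1} b_{2r}' b_{2k-2r} for sequences b (left bubbles) and b' (right bubbles), then setting E_r = (-1)^{r-1} z b_{2r} and H_r = z b'_{2r} satisfies the defining relations of Sym. -/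
/-! Every term of `∑_{r=0}^{m} (-1)^r E_{m-r} H_r` has the factor `(-1)^(m-1) z`; after removing
it the end terms are `b_{2m}` and `-b'_{2m}` and the middle ones `z b'_{2r} b_{2m-2r}`, which add up
to zero by the bubble identity. -/

/-- The image of the elementary symmetric function `e_r`: `E_0 = 1`,
`E_r = (-1)^{r-1} z b_{2r}` for `r ≥ 1` (here `b r` denotes the left bubble `b_{2r}`). -/
def Ee {R : Type*} [CommRing R] (z : R) (b : ℕ → R) (r : ℕ) : R :=
  if r = 0 then 1 else (-1) ^ (r - 1) * z * b r

/-- The image of the complete homogeneous symmetric function `h_r`: `H_0 = 1`,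
`H_r = z b'_{2r}` for `r ≥ 1` (here `b' r` denotes the right bubble `b'_{2r}`). -/
def Hh {R : Type*} [CommRing R] (z : R) (b' : ℕ → R) (r : ℕ) : R :=
  if r = 0 then 1 else z * b' r

section

variable {R : Type*} [CommRing R] (z : R) (b b' : ℕ → R)

theorem Ee_zero : Ee z b 0 = 1 :=
  if_pos rfl

theorem Hh_zero : Hh z b' 0 = 1 :=
  if_pos rfl

theorem Ee_of_pos {r : ℕ} (hr : 0 < r) : Ee z b r = (-1) ^ (r - 1) * z * b r :=
  if_neg hr.ne'

theorem Hh_of_pos {r : ℕ} (hr : 0 < r) : Hh z b' r = z * b' r :=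
  if_neg hr.ne'

theorem neg_one_pow_mul_Ee_mul_Hh {m r : ℕ} (hr : 0 < r) (hrm : r < m) :
    (-1 : R) ^ r * Ee z b (m - r) * Hh z b' r = (-1) ^ (m - 1) * z * (z * (b' r * b (m - r))) := by
  rw [Ee_of_pos z b (Nat.sub_pos_of_lt hrm), Hh_of_pos z b' hr,
    show m - 1 = m - r - 1 + r by omega, pow_add]
  ring

end

/-- If the bubbles satisfy `b'_{2k} - b_{2k} = z ∑_{r=1}^{k-1} b'_{2r} b_{2k-2r}` for all
`k > 0`, then the assignment `e_r ↦ (-1)^{r-1} z b_{2r}`, `h_r ↦ z b'_{2r}` satisfies the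
defining relations `∑_{r=0}^{k} (-1)^r e_{k-r} h_r = 0` (k > 0) of the ring of symmetric
functions, so it yields a well-defined ring homomorphism `β : Sym → R`. -/
theorem stmt16 (R : Type*) [CommRing R] (z : R) (b b' : ℕ → R)
    (hbub : ∀ m : ℕ, 0 < m →
      b' m - b m = z * ∑ r ∈ Finset.Ico 1 m, b' r * b (m - r)) :
    ∀ m : ℕ, 0 < m →
      ∑ r ∈ Finset.range (m + 1), (-1 : R) ^ r * Ee z b (m - r) * Hh z b' r = 0 := by
  intro m hm
  have hsign : (-1 : R) ^ m = -(-1) ^ (m - 1) := by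
    rw [← Nat.sub_add_cancel hm, pow_succ, Nat.add_sub_cancel]; ring
  rw [Finset.sum_range_succ, Finset.range_eq_Ico, Finset.sum_eq_sum_Ico_succ_bot hm,
    Finset.sum_congr rfl fun r hr => neg_one_pow_mul_Ee_mul_Hh z b b'
      (Finset.mem_Ico.1 hr).1 (Finset.mem_Ico.1 hr).2,
    ← Finset.mul_sum, ← Finset.mul_sum, ← hbub m hm, Nat.sub_zero, Nat.sub_self,
    Ee_of_pos z b hm, Hh_of_pos z b' hm, Ee_zero, Hh_zero, hsign]
  ring
end
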